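/- Assume r_Φ(a) ≥ 0 for all a, and set w_a = π(a) r_Φ(a) and p_{a,n} = (1 − π_D(a))^n. Then the variance of Σ_a w_a · 1{n(a) > 0} is at most Σ_a w_a² · p_{a,n}(1 − p_{a,n}). (The key step is the negative-association inequality: for distinct actions a ≠ b, E[(1{n(a)>0} − (1−p_{a,n}))(1{n(b)>0} − (1−p_{b,n}))] ≤ 0.) -/

import Mathlib

/-!
Write `1{n(a) > 0} = 1 - 1{A_a}`, where `A_a` is the event that action `a` is never drawn.
By independence of the draws, `P(A_a) = (1 - π_D(a))^n` and
`P(A_a ∩ A_b) = (1 - π_D(a) - π_D(b))^n`, which is at most `P(A_a) P(A_b)` because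
`1 - x - y ≤ (1 - x)(1 - y)`; so the indicators are pairwise negatively correlated. Expanding the
variance of `Σ_a w_a 1{n(a) > 0}` into covariances, the off-diagonal terms are nonpositive as
`w ≥ 0`, and the diagonal ones are `w_a² p_{a,n}(1 - p_{a,n})`.
-/

open MeasureTheory ENNReal

noncomputable section

namespace OffPolicy

variable {K : ℕ}

/-- `π` is a probability mass function on the action set. -/
def IsPolicy (π : Fin K → ℝ) : Prop := (∀ a, 0 ≤ π a) ∧ ∑ a, π a = 1

/-- A behavior policy: a pmf with everywhere positive probabilities. -/
def IsBehaviorPolicy (πD : Fin K → ℝ) : Prop := (∀ a, 0 < πD a) ∧ ∑ a, πD a = 1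

/-- The distribution of a single action `A ~ π_D`. -/
def actionMeasure (πD : Fin K → ℝ) : Measure (Fin K) :=
  ∑ a : Fin K, (πD a).toNNReal • Measure.dirac a

instance actionMeasure_finite (πD : Fin K → ℝ) : IsFiniteMeasure (actionMeasure πD) := by
  unfold actionMeasure; infer_instance

/-- The distribution of the i.i.d. actions `A_1, …, A_n`. -/
def actionData (n : ℕ) (πD : Fin K → ℝ) : Measure (Fin n → Fin K) :=
  Measure.pi fun _ => actionMeasure πD

/-- `n(a) = #{i : A_i = a}`. -/
def cntA (n : ℕ) (d : Fin n → Fin K) (a : Fin K) : ℕ :=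
  (Finset.univ.filter fun i => d i = a).card

open ProbabilityTheory

lemma one_sub_add_pow_le_mul_pow {x y : ℝ} (hx : 0 ≤ x) (hy : 0 ≤ y) (hxy : x + y ≤ 1)
    (n : ℕ) : (1 - (x + y)) ^ n ≤ (1 - x) ^ n * (1 - y) ^ n := by
  rw [← mul_pow]
  exact pow_le_pow_left₀ (by linarith) (by nlinarith) n

section Covariance

variable {Ω ι : Type*} [MeasurableSpace Ω] {μ : Measure Ω}

lemma variance_sum_le_of_pairwise_covariance_nonpos [IsFiniteMeasure μ] [Fintype ι]
    {X : ι → Ω → ℝ} {w : ι → ℝ} (hw : ∀ i, 0 ≤ w i) (hX : ∀ i, MemLp (X i) 2 μ)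
    (hcov : Pairwise fun i j => cov[X i, X j; μ] ≤ 0) :
    Var[fun ω => ∑ i, w i * X i ω; μ] ≤ ∑ i, w i ^ 2 * Var[X i; μ] := by
  classical
  rw [variance_fun_sum fun i => (hX i).const_mul (w i)]
  refine Finset.sum_le_sum fun i _ => ?_
  rw [← Finset.add_sum_erase _ _ (Finset.mem_univ i), covariance_const_mul_left,
    covariance_const_mul_right, covariance_self (hX i).aemeasurable]
  have hoff : ∑ j ∈ Finset.univ.erase i,
      cov[fun ω => w i * X i ω, fun ω => w j * X j ω; μ] ≤ 0 := by
    refine Finset.sum_nonpos fun j hj => ?_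
    rw [covariance_const_mul_left, covariance_const_mul_right, ← mul_assoc]
    exact mul_nonpos_of_nonneg_of_nonpos (mul_nonneg (hw i) (hw j))
      (hcov (Finset.ne_of_mem_erase hj).symm)
  nlinarith

lemma covariance_indicator_one [IsProbabilityMeasure μ] {A B : Set Ω}
    (hA : MeasurableSet A) (hB : MeasurableSet B) :
    cov[A.indicator 1, B.indicator 1; μ] = μ.real (A ∩ B) - μ.real A * μ.real B := by
  have hA2 : MemLp (A.indicator (1 : Ω → ℝ)) 2 μ := (memLp_const 1).indicator hA
  have hB2 : MemLp (B.indicator (1 : Ω → ℝ)) 2 μ := (memLp_const 1).indicator hB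
  rw [covariance_eq_sub hA2 hB2, ← Set.inter_indicator_one, integral_indicator_one (hA.inter hB),
    integral_indicator_one hA, integral_indicator_one hB]

end Covariance

section Policy

variable {π : Fin K → ℝ}

lemma IsBehaviorPolicy.isPolicy (h : IsBehaviorPolicy π) : IsPolicy π :=
  ⟨fun a => (h.1 a).le, h.2⟩

lemma IsPolicy.add_le_one (h : IsPolicy π) {a b : Fin K} (hab : a ≠ b) : π a + π b ≤ 1 := by
  rw [← h.2, ← Finset.sum_pair hab]
  exact Finset.sum_le_sum_of_subset_of_nonneg (Finset.subset_univ _) fun x _ _ => h.1 x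

lemma IsPolicy.sum_compl (h : IsPolicy π) (S : Finset (Fin K)) :
    ∑ x ∈ Sᶜ, π x = 1 - ∑ x ∈ S, π x := by
  rw [← h.2, ← Finset.sum_compl_add_sum S, add_sub_cancel_right]

end Policy

section ActionData

variable {πD : Fin K → ℝ}

lemma actionMeasure_real_coe_finset (h0 : ∀ a, 0 ≤ πD a) (T : Finset (Fin K)) :
    (actionMeasure πD).real T = ∑ x ∈ T, πD x := by
  simp [actionMeasure, measureReal_def, Measure.finsetSum_apply, Set.indicator_apply,
    ENNReal.toReal_sum, h0]

lemma isProbabilityMeasure_actionMeasure (h : IsPolicy πD) :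
    IsProbabilityMeasure (actionMeasure πD) := by
  rw [isProbabilityMeasure_iff_real, ← Finset.coe_univ, actionMeasure_real_coe_finset h.1, h.2]

lemma isProbabilityMeasure_actionData (n : ℕ) (h : IsPolicy πD) :
    IsProbabilityMeasure (actionData n πD) :=
  have := isProbabilityMeasure_actionMeasure h
  Measure.pi.instIsProbabilityMeasure _

def avoiding (n : ℕ) (S : Finset (Fin K)) : Set (Fin n → Fin K) := {d | ∀ i, d i ∉ S}

lemma avoiding_eq_pi (n : ℕ) (S : Finset (Fin K)) :
    avoiding n S = Set.univ.pi fun _ => ((Sᶜ : Finset (Fin K)) : Set (Fin K)) := by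
  ext d; simp [avoiding]

lemma avoiding_inter_avoiding (n : ℕ) (S T : Finset (Fin K)) :
    avoiding n S ∩ avoiding n T = avoiding n (S ∪ T) := by
  ext d; simp [avoiding, forall_and]

lemma measurableSet_avoiding (n : ℕ) (S : Finset (Fin K)) : MeasurableSet (avoiding n S) :=
  .of_discrete

lemma actionData_real_avoiding (n : ℕ) (h : IsPolicy πD) (S : Finset (Fin K)) :
    (actionData n πD).real (avoiding n S) = (1 - ∑ x ∈ S, πD x) ^ n := by
  rw [avoiding_eq_pi, actionData, measureReal_def, Measure.pi_pi, ENNReal.toReal_prod]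
  simp_rw [← measureReal_def, actionMeasure_real_coe_finset h.1, h.sum_compl]
  rw [Finset.prod_const, Finset.card_univ, Fintype.card_fin]

lemma cntA_eq_zero_iff_mem_avoiding (n : ℕ) (d : Fin n → Fin K) (a : Fin K) :
    cntA n d a = 0 ↔ d ∈ avoiding n {a} := by
  simp [cntA, avoiding, Finset.filter_eq_empty_iff]

lemma ite_pos_cntA_eq_one_sub_indicator (n : ℕ) (d : Fin n → Fin K) (a : Fin K) :
    (if 0 < cntA n d a then (1 : ℝ) else 0) = 1 - (avoiding n {a}).indicator 1 d := by
  classical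
  rw [Set.indicator_apply, ← cntA_eq_zero_iff_mem_avoiding]
  by_cases h : cntA n d a = 0 <;> simp [h, Nat.pos_iff_ne_zero]

variable {n : ℕ}

lemma integral_ite_pos_cntA (h : IsPolicy πD) (a : Fin K) :
    ∫ d, (if 0 < cntA n d a then (1 : ℝ) else 0) ∂(actionData n πD) =
      1 - (1 - πD a) ^ n := by
  have := isProbabilityMeasure_actionData n h
  simp_rw [ite_pos_cntA_eq_one_sub_indicator]
  rw [integral_sub (integrable_const 1) Integrable.of_finite, integral_const,
    integral_indicator_one (measurableSet_avoiding n {a}), actionData_real_avoiding n h]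
  simp

lemma covariance_ite_pos_cntA (h : IsPolicy πD) (a b : Fin K) :
    cov[fun d => if 0 < cntA n d a then (1 : ℝ) else 0,
        fun d => if 0 < cntA n d b then (1 : ℝ) else 0; actionData n πD] =
      (1 - ∑ x ∈ {a, b}, πD x) ^ n - (1 - πD a) ^ n * (1 - πD b) ^ n := by
  have := isProbabilityMeasure_actionData n h
  simp_rw [ite_pos_cntA_eq_one_sub_indicator]
  rw [covariance_const_sub_left Integrable.of_finite,
    covariance_const_sub_right Integrable.of_finite, neg_neg,
    covariance_indicator_one (measurableSet_avoiding n {a}) (measurableSet_avoiding n {b}),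
    avoiding_inter_avoiding, ← Finset.insert_eq, actionData_real_avoiding n h,
    actionData_real_avoiding n h, actionData_real_avoiding n h, Finset.sum_singleton,
    Finset.sum_singleton]

lemma variance_ite_pos_cntA (h : IsPolicy πD) (a : Fin K) :
    Var[fun d => if 0 < cntA n d a then (1 : ℝ) else 0; actionData n πD] =
      (1 - πD a) ^ n * (1 - (1 - πD a) ^ n) := by
  rw [← covariance_self Measurable.of_discrete.aemeasurable, covariance_ite_pos_cntA h,
    Finset.pair_eq_singleton, Finset.sum_singleton]
  ring

lemma covariance_ite_pos_cntA_nonpos (h : IsPolicy πD) {a b : Fin K} (hab : a ≠ b) :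
    cov[fun d => if 0 < cntA n d a then (1 : ℝ) else 0,
        fun d => if 0 < cntA n d b then (1 : ℝ) else 0; actionData n πD] ≤ 0 := by
  rw [covariance_ite_pos_cntA h, Finset.sum_pair hab, sub_nonpos]
  exact one_sub_add_pow_le_mul_pow (h.1 a) (h.1 b) (h.add_le_one hab) n

end ActionData

/-- Lemma 2: with `w_a = π(a) r_Φ(a) ≥ 0` and
`p_{a,n} = (1 − π_D(a))^n`, the variance of `Σ_a w_a 1{n(a)>0}` is at most
`Σ_a w_a² p_{a,n}(1 − p_{a,n})`; the key step is the negative-association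
inequality `E[(1{n(a)>0} − (1 − p_{a,n}))(1{n(b)>0} − (1 − p_{b,n}))] ≤ 0`
for distinct actions `a ≠ b`. -/
theorem variance_indicator_sum_le {K : ℕ} (n : ℕ)
    (π πD : Fin K → ℝ) (hπ : IsPolicy π) (hπD : IsBehaviorPolicy πD)
    (r : Fin K → ℝ) (hr : ∀ a, 0 ≤ r a) :
    (∫ d, ((∑ a, π a * r a * (if 0 < cntA n d a then (1 : ℝ) else 0)) -
          ∫ d', (∑ a, π a * r a * (if 0 < cntA n d' a then (1 : ℝ) else 0))
            ∂(actionData n πD)) ^ 2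
        ∂(actionData n πD)) ≤
      ∑ a, (π a * r a) ^ 2 * ((1 - πD a) ^ n * (1 - (1 - πD a) ^ n)) ∧
    ∀ a b : Fin K, a ≠ b →
      (∫ d, ((if 0 < cntA n d a then (1 : ℝ) else 0) - (1 - (1 - πD a) ^ n)) *
            ((if 0 < cntA n d b then (1 : ℝ) else 0) - (1 - (1 - πD b) ^ n))
          ∂(actionData n πD)) ≤ 0 := by
  have hD := hπD.isPolicy
  have := isProbabilityMeasure_actionData n hD
  refine ⟨?_, fun a b hab => ?_⟩
  · rw [← variance_eq_integral Measurable.of_discrete.aemeasurable]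
    calc _ ≤ ∑ a, (π a * r a) ^ 2 * Var[fun d => if 0 < cntA n d a then (1 : ℝ) else 0;
          actionData n πD] :=
          variance_sum_le_of_pairwise_covariance_nonpos (fun a => mul_nonneg (hπ.1 a) (hr a))
            (fun _ => .of_discrete) fun a b hab => covariance_ite_pos_cntA_nonpos hD hab
      _ = _ := by simp_rw [variance_ite_pos_cntA hD]
  · rw [← integral_ite_pos_cntA hD a, ← integral_ite_pos_cntA hD b]
    exact covariance_ite_pos_cntA_nonpos hD hab

end OffPolicy
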